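/- arXiv:2402.15902 — 4 statements merged into one kernel-verified Lean document; each statement's English description precedes it below -/
import Mathlib

section
/- With notation as above, the graph Gabor system {ψ_{ij}(t)}_{i,j=1}^N = {D_i(t)φ_{λ_j}}_{i,j=1}^N forms a frame for ℂ^N for all t ≥ 0; that is, there exist constants 0 < A ≤ B with A‖f‖² ≤ Σ_{i,j} |⟨f, ψ_{ij}(t)⟩|² ≤ B‖f‖² for all f ∈ ℂ^N. -/
/-!
Since `Φ` is unitary, summing over `j` gives `∑ⱼ |⟨f, D_i φ_j⟩|² = ‖D_i f‖²`, so the frame operator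
is diagonal and the frame sum equals `∑ₖ |f k|² ∑ᵢ |H k i|²`. The weights `∑ᵢ |H k i|²` are the
squared row norms of the invertible matrix `e^{-tL}`, hence positive; their minimum and maximum
are frame bounds.
-/

open Matrix

section

variable {n 𝕜 : Type*} [Fintype n] [DecidableEq n] [RCLike 𝕜]

theorem Matrix.sum_norm_sq_mulVec_of_mem_unitaryGroup {U : Matrix n n 𝕜}
    (hU : U ∈ unitaryGroup n 𝕜) (v : n → 𝕜) :
    ∑ i, ‖(U *ᵥ v) i‖ ^ 2 = ∑ i, ‖v i‖ ^ 2 := by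
  have hU' : toEuclideanCLM (𝕜 := 𝕜) U ∈ unitary _ := Unitary.map_mem _ hU
  have := congrArg (· ^ 2) (ContinuousLinearMap.norm_map_of_mem_unitary hU' (WithLp.toLp 2 v))
  rwa [EuclideanSpace.norm_sq_eq, EuclideanSpace.norm_sq_eq] at this

theorem Matrix.sum_norm_sq_row_pos_of_isUnit {A : Matrix n n 𝕜} (hA : IsUnit A) (k : n) :
    0 < ∑ i, ‖A k i‖ ^ 2 := by
  obtain ⟨i, hi⟩ : ∃ i, A k i ≠ 0 := by
    by_contra! h
    exact not_isUnit_zero (det_eq_zero_of_row_eq_zero k h ▸ (isUnit_iff_isUnit_det A).mp hA)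
  exact Finset.sum_pos' (fun i _ => by positivity) ⟨i, Finset.mem_univ i, by positivity⟩

def gaborAtom (H U : Matrix n n 𝕜) (i j : n) : n → 𝕜 :=
  diagonal (fun k => H k i) *ᵥ (fun k => U k j)

@[simp]
theorem gaborAtom_apply (H U : Matrix n n 𝕜) (i j k : n) : gaborAtom H U i j k = H k i * U k j :=
  mulVec_diagonal _ _ _

theorem sum_sum_norm_sq_inner_gaborAtom (H : Matrix n n 𝕜) {U : Matrix n n 𝕜}
    (hU : U ∈ unitaryGroup n 𝕜) (f : n → 𝕜) :
    ∑ i, ∑ j, ‖∑ k, f k * starRingEnd 𝕜 (gaborAtom H U i j k)‖ ^ 2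
      = ∑ k, ‖f k‖ ^ 2 * ∑ i, ‖H k i‖ ^ 2 := by
  have hU' : Uᴴ ∈ unitaryGroup n 𝕜 := Unitary.star_mem hU
  have hrow (i : n) : ∑ j, ‖∑ k, f k * starRingEnd 𝕜 (gaborAtom H U i j k)‖ ^ 2
      = ∑ k, ‖f k‖ ^ 2 * ‖H k i‖ ^ 2 := by
    calc _ = ∑ j, ‖(Uᴴ *ᵥ fun k => f k * starRingEnd 𝕜 (H k i)) j‖ ^ 2 := by
          refine Finset.sum_congr rfl fun j _ => congrArg (‖·‖ ^ 2) ?_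
          simp only [gaborAtom_apply, mulVec, dotProduct, conjTranspose_apply, RCLike.star_def,
            map_mul]
          exact Finset.sum_congr rfl fun k _ => by ring
      _ = ∑ k, ‖f k‖ ^ 2 * ‖H k i‖ ^ 2 := by
          simp only [sum_norm_sq_mulVec_of_mem_unitaryGroup hU', norm_mul, mul_pow,
            RCLike.norm_conj]
  rw [Finset.sum_congr rfl fun i _ => hrow i, Finset.sum_comm]
  simp only [Finset.mul_sum]

theorem exists_pos_bounds_sum_mul {ι : Type*} [Fintype ι] {w : ι → ℝ} (hw : ∀ k, 0 < w k) :
    ∃ A B : ℝ, 0 < A ∧ A ≤ B ∧ ∀ a : ι → ℝ, (∀ k, 0 ≤ a k) →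
      A * ∑ k, a k ≤ ∑ k, a k * w k ∧ ∑ k, a k * w k ≤ B * ∑ k, a k := by
  obtain ⟨A, B, hA, hAB, hwAB⟩ : ∃ A B : ℝ, 0 < A ∧ A ≤ B ∧ ∀ k, A ≤ w k ∧ w k ≤ B := by
    cases isEmpty_or_nonempty ι with
    | inl _ => exact ⟨1, 1, one_pos, le_rfl, isEmptyElim⟩
    | inr _ =>
      have hlo (k : ι) := Finset.univ.inf'_le w (Finset.mem_univ k)
      have hhi (k : ι) := Finset.univ.le_sup' w (Finset.mem_univ k)
      obtain ⟨k₀⟩ := ‹Nonempty ι›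
      exact ⟨_, _, (Finset.lt_inf'_iff _).mpr fun k _ => hw k, (hlo k₀).trans (hhi k₀),
        fun k => ⟨hlo k, hhi k⟩⟩
  refine ⟨A, B, hA, hAB, fun a ha => ⟨?_, ?_⟩⟩ <;> rw [Finset.mul_sum] <;>
    refine Finset.sum_le_sum fun k _ => ?_
  · rw [mul_comm]; exact mul_le_mul_of_nonneg_left (hwAB k).1 (ha k)
  · rw [mul_comm B]; exact mul_le_mul_of_nonneg_left (hwAB k).2 (ha k)

end

theorem graphGabor_is_frame_general {N : ℕ} (G : SimpleGraph (Fin N)) [DecidableRel G.Adj]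
    (Φ : Matrix (Fin N) (Fin N) ℂ) (hΦ : Φ ∈ Matrix.unitaryGroup (Fin N) ℂ)
    (t : ℝ)
    (H : Matrix (Fin N) (Fin N) ℂ)
    (hH : H = NormedSpace.exp ((-t : ℂ) • G.lapMatrix ℂ))
    (ψ : Fin N → Fin N → Fin N → ℂ)
    (hψ : ∀ i j, ψ i j = Matrix.diagonal (fun k => H k i) *ᵥ (fun k => Φ k j)) :
    ∃ A B : ℝ, 0 < A ∧ A ≤ B ∧ ∀ f : Fin N → ℂ,
      A * ∑ k, ‖f k‖ ^ 2 ≤ ∑ i, ∑ j, ‖∑ k, f k * (starRingEnd ℂ) (ψ i j k)‖ ^ 2 ∧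
      ∑ i, ∑ j, ‖∑ k, f k * (starRingEnd ℂ) (ψ i j k)‖ ^ 2 ≤ B * ∑ k, ‖f k‖ ^ 2 := by
  obtain rfl : ψ = gaborAtom H Φ := funext₂ hψ
  have hrow_pos := sum_norm_sq_row_pos_of_isUnit (hH ▸ isUnit_exp _ : IsUnit H)
  obtain ⟨A, B, hA, hAB, hbounds⟩ := exists_pos_bounds_sum_mul hrow_pos
  refine ⟨A, B, hA, hAB, fun f => ?_⟩
  rw [sum_sum_norm_sq_inner_gaborAtom H hΦ]
  exact hbounds _ fun k => sq_nonneg _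

/-- the graph Gabor system `{D_i(t) φ_j}` forms a frame for `ℂ^N`
for every `t ≥ 0`: there are `0 < A ≤ B` with
`A‖f‖² ≤ ∑_{i,j} |⟨f, ψ_{ij}(t)⟩|² ≤ B‖f‖²` for all `f`. -/
theorem graphGabor_is_frame {N : ℕ} (G : SimpleGraph (Fin N)) [DecidableRel G.Adj]
    (hconn : G.Connected)
    (Φ : Matrix (Fin N) (Fin N) ℂ) (hΦ : Φ ∈ Matrix.unitaryGroup (Fin N) ℂ)
    (lam : Fin N → ℝ)
    (heig : ∀ l, G.lapMatrix ℂ *ᵥ (fun i => Φ i l) = (lam l : ℂ) • (fun i => Φ i l))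
    (t : ℝ) (ht : 0 ≤ t)
    (H : Matrix (Fin N) (Fin N) ℂ)
    (hH : H = NormedSpace.exp ((-t : ℂ) • G.lapMatrix ℂ))
    (ψ : Fin N → Fin N → Fin N → ℂ)
    (hψ : ∀ i j, ψ i j = Matrix.diagonal (fun k => H k i) *ᵥ (fun k => Φ k j)) :
    ∃ A B : ℝ, 0 < A ∧ A ≤ B ∧ ∀ f : Fin N → ℂ,
      A * ∑ k, ‖f k‖ ^ 2 ≤ ∑ i, ∑ j, ‖∑ k, f k * (starRingEnd ℂ) (ψ i j k)‖ ^ 2 ∧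
      ∑ i, ∑ j, ‖∑ k, f k * (starRingEnd ℂ) (ψ i j k)‖ ^ 2 ≤ B * ∑ k, ‖f k‖ ^ 2 :=
  graphGabor_is_frame_general G Φ hΦ t H hH ψ hψ
end

section
/- The graph Gabor system {D_i(t)φ_{λ_j}}_{i,j=1}^N is a tight frame for ℂ^N (at a given t ≥ 0) if and only if all columns of the heat kernel H_t have equal norm, i.e. ‖H_t(·, v_i)‖ = ‖H_t(·, v_j)‖ for all i, j. -/
/-!
Since `Φ` is unitary, Parseval's identity applied window by window turns the frame sum into
`∑ k, ‖f k‖² * ‖H(·, v_k)‖²` (the heat kernel is symmetric, so rows and columns agree). Such a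
weighted sum is a fixed multiple of `‖f‖²` exactly when the weights are constant, and the weights
are positive because `H = exp (-t L)` is invertible.
-/

open Matrix

section Parseval

variable {𝕜 n : Type*} [RCLike 𝕜] [Fintype n] [DecidableEq n]

theorem Matrix.sum_norm_sq_conjTranspose_mulVec {U : Matrix n n 𝕜} (hU : U ∈ unitaryGroup n 𝕜)
    (g : n → 𝕜) : ∑ j, ‖(Uᴴ *ᵥ g) j‖ ^ 2 = ∑ k, ‖g k‖ ^ 2 := by
  have hdot : star (Uᴴ *ᵥ g) ⬝ᵥ (Uᴴ *ᵥ g) = star g ⬝ᵥ g := by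
    rw [star_mulVec, conjTranspose_conjTranspose, dotProduct_mulVec, vecMul_vecMul,
      ← star_eq_conjTranspose, Unitary.mul_star_self_of_mem hU, vecMul_one]
  have hnorm : ∀ v : n → 𝕜, star v ⬝ᵥ v = ((∑ k, ‖v k‖ ^ 2 : ℝ) : 𝕜) := fun v => by
    simp [dotProduct, RCLike.conj_mul]
  exact_mod_cast (hnorm _).symm.trans (hdot.trans (hnorm g))

/-- `∑ k, f k * conj (W i k * Φ k j)` is the coefficient `⟪f, diag (W i) φ_j⟫`. -/
theorem sum_norm_sq_gabor_coeff {ι : Type*} [Fintype ι] (W : Matrix ι n 𝕜) {Φ : Matrix n n 𝕜}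
    (hΦ : Φ ∈ unitaryGroup n 𝕜) (f : n → 𝕜) :
    ∑ i, ∑ j, ‖∑ k, f k * starRingEnd 𝕜 (W i k * Φ k j)‖ ^ 2
      = ∑ k, ‖f k‖ ^ 2 * ∑ i, ‖W i k‖ ^ 2 := by
  have hwindow : ∀ i, ∑ j, ‖∑ k, f k * starRingEnd 𝕜 (W i k * Φ k j)‖ ^ 2
      = ∑ k, ‖f k‖ ^ 2 * ‖W i k‖ ^ 2 := fun i => by
    have := sum_norm_sq_conjTranspose_mulVec hΦ (fun k => f k * starRingEnd 𝕜 (W i k))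
    simp only [mulVec, dotProduct, conjTranspose_apply, norm_mul, RCLike.norm_conj,
      mul_pow] at this
    refine (Finset.sum_congr rfl fun j _ => ?_).trans this
    congr 2
    refine Finset.sum_congr rfl fun k _ => ?_
    simp only [map_mul, RCLike.star_def]
    ring
  simp_rw [hwindow, Finset.mul_sum]
  exact Finset.sum_comm

end Parseval

theorem Matrix.sum_column_norm_sq_pos_of_isUnit {n R : Type*} [Fintype n] [DecidableEq n]
    [NormedCommRing R] [Nontrivial R] {A : Matrix n n R} (hA : IsUnit A) (j : n) :
    0 < ∑ i, ‖A i j‖ ^ 2 := by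
  refine Finset.sum_pos' (fun i _ => sq_nonneg _) ?_
  by_contra! h
  have hcol : ∀ i, A i j = 0 := fun i => by
    simpa using le_antisymm (h i (Finset.mem_univ i)) (sq_nonneg _)
  exact ((isUnit_iff_isUnit_det A).mp hA).ne_zero (det_eq_zero_of_column_eq_zero j hcol)

theorem exists_pos_sum_norm_sq_mul_eq_iff {ι E : Type*} [Fintype ι] [NormedAddCommGroup E]
    [Nontrivial E] {w : ι → ℝ} (hw : ∀ k, 0 < w k) :
    (∃ A : ℝ, 0 < A ∧ ∀ f : ι → E, ∑ k, ‖f k‖ ^ 2 * w k = A * ∑ k, ‖f k‖ ^ 2)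
      ↔ ∀ k l, w k = w l := by
  classical
  constructor
  · rintro ⟨A, -, hA⟩
    obtain ⟨x, hx⟩ := exists_ne (0 : E)
    have hwA : ∀ k, w k = A := fun k => by
      have := hA (Pi.single k x)
      rw [Fintype.sum_eq_single k fun l hl => by simp [hl],
        Fintype.sum_eq_single k fun l hl => by simp [hl], Pi.single_eq_same] at this
      have hx2 : ‖x‖ ^ 2 ≠ 0 := by positivity
      exact mul_left_cancel₀ hx2 (by linarith)
    intro k l
    rw [hwA k, hwA l]
  · intro hconst
    cases isEmpty_or_nonempty ι with
    | inl _ => exact ⟨1, one_pos, fun f => by simp⟩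
    | inr h =>
      obtain ⟨k₀⟩ := h
      refine ⟨w k₀, hw k₀, fun f => ?_⟩
      rw [Finset.mul_sum]
      exact Finset.sum_congr rfl fun k _ => by rw [hconst k k₀, mul_comm]

theorem graphGabor_tight_iff_general {N : ℕ} (G : SimpleGraph (Fin N)) [DecidableRel G.Adj]
    (Φ : Matrix (Fin N) (Fin N) ℂ) (hΦ : Φ ∈ Matrix.unitaryGroup (Fin N) ℂ)
    (t : ℝ)
    (H : Matrix (Fin N) (Fin N) ℂ)
    (hH : H = NormedSpace.exp ((-t : ℂ) • G.lapMatrix ℂ))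
    (ψ : Fin N → Fin N → Fin N → ℂ)
    (hψ : ∀ i j, ψ i j = Matrix.diagonal (fun k => H k i) *ᵥ (fun k => Φ k j)) :
    (∃ A : ℝ, 0 < A ∧ ∀ f : Fin N → ℂ,
        ∑ i, ∑ j, ‖∑ k, f k * (starRingEnd ℂ) (ψ i j k)‖ ^ 2 = A * ∑ k, ‖f k‖ ^ 2)
      ↔ ∀ i j : Fin N,
          Real.sqrt (∑ k, ‖H k i‖ ^ 2) = Real.sqrt (∑ k, ‖H k j‖ ^ 2) := by
  have hsymm : H.IsSymm := hH ▸ ((G.isSymm_lapMatrix (R := ℂ)).smul _).exp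
  have hψ_apply : ∀ i j k, ψ i j k = H i k * Φ k j := fun i j k => by
    rw [hψ, mulVec_diagonal, hsymm.apply]
  have hpos : ∀ k, 0 < ∑ i, ‖H i k‖ ^ 2 :=
    sum_column_norm_sq_pos_of_isUnit (by rw [hH]; exact isUnit_exp _)
  simp only [hψ_apply, sum_norm_sq_gabor_coeff H hΦ, exists_pos_sum_norm_sq_mul_eq_iff hpos]
  exact forall₂_congr fun i j => (Real.sqrt_inj (by positivity) (by positivity)).symm

/-- the graph Gabor system `{D_i(t) φ_j}` is a tight frame for `ℂ^N`
at a given `t ≥ 0` if and only if all columns of the heat kernel have equal norm. -/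
theorem graphGabor_tight_iff {N : ℕ} (G : SimpleGraph (Fin N)) [DecidableRel G.Adj]
    (hconn : G.Connected)
    (Φ : Matrix (Fin N) (Fin N) ℂ) (hΦ : Φ ∈ Matrix.unitaryGroup (Fin N) ℂ)
    (lam : Fin N → ℝ)
    (heig : ∀ l, G.lapMatrix ℂ *ᵥ (fun i => Φ i l) = (lam l : ℂ) • (fun i => Φ i l))
    (t : ℝ) (ht : 0 ≤ t)
    (H : Matrix (Fin N) (Fin N) ℂ)
    (hH : H = NormedSpace.exp ((-t : ℂ) • G.lapMatrix ℂ))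
    (ψ : Fin N → Fin N → Fin N → ℂ)
    (hψ : ∀ i j, ψ i j = Matrix.diagonal (fun k => H k i) *ᵥ (fun k => Φ k j)) :
    (∃ A : ℝ, 0 < A ∧ ∀ f : Fin N → ℂ,
        ∑ i, ∑ j, ‖∑ k, f k * (starRingEnd ℂ) (ψ i j k)‖ ^ 2 = A * ∑ k, ‖f k‖ ^ 2)
      ↔ ∀ i j : Fin N,
          Real.sqrt (∑ k, ‖H k i‖ ^ 2) = Real.sqrt (∑ k, ‖H k j‖ ^ 2) :=
  graphGabor_tight_iff_general G Φ hΦ t H hH ψ hψ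
end

section
/- Define the graph short-time Fourier transform V_t: ℂ^N → ℂ^{N×N} by (V_t f)(v_i, λ_j) = Σ_{k=1}^N f(v_k) H_t(v_i, v_k) conj(φ_{λ_j}(v_k)), and define W_t: ℂ^{N×N} → ℂ^N by (W_t F)(v_i) = ‖H_t(·, v_i)‖^{-2} Σ_{j=1}^N φ_j(v_i) Σ_{k=1}^N F(v_k, λ_j) H_t(v_k, v_i). Then W_t V_t f = f for every f ∈ ℂ^N, i.e. W_t is a left inverse of V_t. -/
open Matrix

/-! Writing `D f` for the diagonal matrix of `f`, the transform is `V f = H * D f * Φ`.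
Then `W (V f) i` is the diagonal entry `(Hᵀ * (H * D f * Φ) * Φᵀ) i i`, which by `Φ Φᵀ = 1`
equals `(Hᵀ H) i i * f i = ‖H(·, i)‖² f i`; the norm is nonzero because the heat kernel
`exp (-t L)` is invertible. -/

namespace Matrix

variable {n R : Type*} [Fintype n] [DecidableEq n]

lemma col_ne_zero_of_isUnit [Field R] {H : Matrix n n R} (hH : IsUnit H) (i : n) :
    H.col i ≠ 0 := by
  rw [← mulVec_single_one, ← mulVec_zero H]
  intro h
  simpa using congrFun ((mulVec_injective_iff_isUnit.mpr hH) h) i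

lemma sum_sq_col_pos_of_isUnit [Field R] [LinearOrder R] [IsStrictOrderedRing R]
    {H : Matrix n n R} (hH : IsUnit H) (i : n) : 0 < ∑ k, H k i ^ 2 := by
  obtain ⟨k, hk⟩ := Function.ne_iff.mp (col_ne_zero_of_isUnit hH i)
  exact Finset.sum_pos' (fun _ _ => sq_nonneg _)
    ⟨k, Finset.mem_univ k, pow_two_pos_of_ne_zero hk⟩

lemma sum_mul_sum_mul_diagonal_mul [CommRing R] {Φ : Matrix n n R} (hΦ : Φ * Φᵀ = 1)
    (H : Matrix n n R) (f : n → R) (i : n) :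
    ∑ j, Φ i j * ∑ k, (H * diagonal f * Φ) k j * H k i = (∑ k, H k i ^ 2) * f i :=
  calc ∑ j, Φ i j * ∑ k, (H * diagonal f * Φ) k j * H k i
      = (Hᵀ * (H * diagonal f * Φ) * Φᵀ) i i := by
        simp only [mul_apply (M := Hᵀ * _), mul_apply (M := Hᵀ), transpose_apply]
        exact Finset.sum_congr rfl fun j _ => by rw [mul_comm]; simp only [mul_comm (H _ i)]
    _ = (Hᵀ * H * diagonal f * (Φ * Φᵀ)) i i := by simp only [Matrix.mul_assoc]
    _ = (∑ k, H k i ^ 2) * f i := by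
        rw [hΦ, Matrix.mul_one, mul_diagonal, mul_apply]
        simp only [transpose_apply, sq]

end Matrix

theorem gstft_left_inverse_general {N : ℕ} (G : SimpleGraph (Fin N)) [DecidableRel G.Adj]
    (Φ : Matrix (Fin N) (Fin N) ℝ) (hΦ : Φ ∈ Matrix.orthogonalGroup (Fin N) ℝ)
    (t : ℝ)
    (H : Matrix (Fin N) (Fin N) ℝ)
    (hH : H = NormedSpace.exp ((-t) • G.lapMatrix ℝ))
    (V : (Fin N → ℝ) → Matrix (Fin N) (Fin N) ℝ)
    (hV : ∀ f i j, V f i j = ∑ k, f k * H i k * Φ k j)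
    (W : Matrix (Fin N) (Fin N) ℝ → (Fin N → ℝ))
    (hW : ∀ F i, W F i = (∑ k, (H k i) ^ 2)⁻¹ * ∑ j, Φ i j * ∑ k, F k j * H k i) :
    ∀ f : Fin N → ℝ, W (V f) = f := by
  intro f
  have hVf : V f = H * diagonal f * Φ := by
    ext i j
    rw [hV, mul_apply]
    exact Finset.sum_congr rfl fun k _ => by rw [mul_diagonal, mul_comm (f k)]
  have hunit : IsUnit H := hH ▸ isUnit_exp _
  funext i
  rw [hW, hVf, sum_mul_sum_mul_diagonal_mul ((mem_orthogonalGroup_iff _ _).mp hΦ),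
    inv_mul_cancel_left₀ (sum_sq_col_pos_of_isUnit hunit i).ne']

/-- the operator `W_t` is a left inverse of the graph short-time
Fourier transform `V_t f (v_i, λ_j) = ∑_k f(v_k) H_t(v_i,v_k) φ_j(v_k)` (real
orthonormal eigenbasis `Φ` of the Laplacian, real symmetric heat kernel). -/
theorem gstft_left_inverse {N : ℕ} (G : SimpleGraph (Fin N)) [DecidableRel G.Adj]
    (hconn : G.Connected)
    (Φ : Matrix (Fin N) (Fin N) ℝ) (hΦ : Φ ∈ Matrix.orthogonalGroup (Fin N) ℝ)
    (lam : Fin N → ℝ)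
    (heig : ∀ l, G.lapMatrix ℝ *ᵥ (fun i => Φ i l) = lam l • (fun i => Φ i l))
    (t : ℝ) (ht : 0 ≤ t)
    (H : Matrix (Fin N) (Fin N) ℝ)
    (hH : H = NormedSpace.exp ((-t) • G.lapMatrix ℝ))
    (V : (Fin N → ℝ) → Matrix (Fin N) (Fin N) ℝ)
    (hV : ∀ f i j, V f i j = ∑ k, f k * H i k * Φ k j)
    (W : Matrix (Fin N) (Fin N) ℝ → (Fin N → ℝ))
    (hW : ∀ F i, W F i = (∑ k, (H k i) ^ 2)⁻¹ * ∑ j, Φ i j * ∑ k, F k j * H k i) :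
    ∀ f : Fin N → ℝ, W (V f) = f :=
  gstft_left_inverse_general G Φ hΦ t H hH V hV W hW
end

section
/- If G is a finite, connected, vertex-transitive graph, then all columns of the heat kernel H_t = e^{-tL} have equal norm for every t ≥ 0; more precisely, for any vertices v_i, v_j there is a permutation matrix P commuting with H_t such that H_t(·, v_j) = P H_t(·, v_i). Consequently the graph Gabor system {D_i(t)φ_{λ_j}}_{i,j=1}^N is a tight frame for ℂ^N for every t ≥ 0. -/
open Matrix

/-!
A graph automorphism `σ` preserves the Laplacian entrywise, i.e. `L` commutes with the
permutation matrix of `σ`; hence so does `H_t = exp (-t L)`, which therefore satisfies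
`H_t (σ k) (σ i) = H_t k i`. Taking `σ i = j` moves column `i` of `H_t` onto column `j`, so all
columns have the same norm.

For the Gabor system `ψ i j = D_i φ_j`, unitarity of `Φ` gives
`∑ j |⟨f, ψ i j⟩|² = ∑ k |f k|² |H_t k i|²`, so the full frame sum is
`∑ k |f k|² ‖row k of H_t‖²`. As `H_t` is symmetric its rows have the common column norm, which
is positive because `H_t` is invertible.
-/

namespace Matrix

variable {n 𝕜 : Type*} [Fintype n]

theorem sum_norm_sq_col_eq_of_submatrix_eq {R : Type*} [Norm R] {σ : Equiv.Perm n}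
    {A : Matrix n n R} (h : A.submatrix σ σ = A) (i : n) :
    ∑ k, ‖A k (σ i)‖ ^ 2 = ∑ k, ‖A k i‖ ^ 2 :=
  calc ∑ k, ‖A k (σ i)‖ ^ 2 = ∑ k, ‖A.submatrix σ σ k i‖ ^ 2 := (Equiv.sum_comp σ _).symm
    _ = ∑ k, ‖A k i‖ ^ 2 := by rw [h]

variable [DecidableEq n]

theorem commute_permMatrix_iff {R : Type*} [NonAssocSemiring R] {σ : Equiv.Perm n}
    {A : Matrix n n R} : Commute (σ.permMatrix R) A ↔ A.submatrix σ σ = A := by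
  rw [Commute, SemiconjBy, PEquiv.toMatrix_toPEquiv_mul, PEquiv.mul_toMatrix_toPEquiv]
  constructor
  · intro h
    ext i j
    simpa using congr_fun (congr_fun h i) (σ j)
  · intro h
    ext i j
    simpa using congr_fun (congr_fun h i) (σ.symm j)

theorem col_eq_permMatrix_mulVec_of_submatrix_eq {R : Type*} [NonAssocSemiring R]
    {σ : Equiv.Perm n} {A : Matrix n n R} (h : A.submatrix σ σ = A) (i : n) :
    A.col (σ i) = σ⁻¹.permMatrix R *ᵥ A.col i := by
  ext k
  rw [PEquiv.toMatrix_toPEquiv_mulVec]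
  conv_rhs => rw [← h]
  simp [Equiv.Perm.inv_def]

variable [RCLike 𝕜]

theorem exp_submatrix_eq_of_submatrix_eq {σ : Equiv.Perm n} {A : Matrix n n 𝕜}
    (h : A.submatrix σ σ = A) : (NormedSpace.exp A).submatrix σ σ = NormedSpace.exp A :=
  commute_permMatrix_iff.mp (commute_permMatrix_iff.mpr h).exp_right

theorem sum_norm_sq_mulVec_of_mem_unitaryGroup_s11 {U : Matrix n n 𝕜}
    (hU : U ∈ unitaryGroup n 𝕜) (v : n → 𝕜) :
    ∑ i, ‖(U *ᵥ v) i‖ ^ 2 = ∑ i, ‖v i‖ ^ 2 := by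
  have h_dot (w : n → 𝕜) : ((∑ i, ‖w i‖ ^ 2 : ℝ) : 𝕜) = star w ⬝ᵥ w := by
    simp [dotProduct, RCLike.conj_mul]
  apply RCLike.ofReal_injective (K := 𝕜)
  rw [h_dot, h_dot, star_mulVec, dotProduct_mulVec, vecMul_vecMul, ← star_eq_conjTranspose,
    mem_unitaryGroup_iff'.mp hU, vecMul_one]

theorem sum_norm_sq_col_pos_of_isUnit {A : Matrix n n 𝕜} (hA : IsUnit A) (i : n) :
    0 < ∑ k, ‖A k i‖ ^ 2 := by
  have hcol : A.col i ≠ 0 := by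
    rw [← mulVec_single_one, ← mulVec_zero A, (mulVec_injective_of_isUnit hA).ne_iff]
    exact Pi.single_ne_zero_iff.mpr one_ne_zero
  obtain ⟨k, hk⟩ := Function.ne_iff.mp hcol
  exact Finset.sum_pos' (fun k _ => by positivity)
    ⟨k, Finset.mem_univ k, pow_pos (norm_pos_iff.mpr hk) 2⟩

theorem exists_pos_forall_sum_norm_sq_col_eq {A : Matrix n n 𝕜} (hA : IsUnit A)
    (h : ∀ i j, ∑ k, ‖A k i‖ ^ 2 = ∑ k, ‖A k j‖ ^ 2) :
    ∃ c, 0 < c ∧ ∀ i, ∑ k, ‖A k i‖ ^ 2 = c := by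
  cases isEmpty_or_nonempty n with
  | inl _ => exact ⟨1, one_pos, isEmptyElim⟩
  | inr _ =>
    obtain ⟨i₀⟩ := ‹Nonempty n›
    exact ⟨_, sum_norm_sq_col_pos_of_isUnit hA i₀, fun i => h i i₀⟩

/-- The vectors `D_i φ_j`, where `D_i` is the diagonal matrix carrying the `i`-th column of the
window matrix `W` and `φ_j` is the `j`-th column of `Φ`. -/
def gaborSystem {m : Type*} (W : Matrix n m 𝕜) (Φ : Matrix n n 𝕜) (i : m) (j : n) : n → 𝕜 :=
  diagonal (W.col i) *ᵥ Φ.col j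

theorem sum_sum_norm_sq_gaborSystem {m : Type*} [Fintype m] {Φ : Matrix n n 𝕜}
    (hΦ : Φ ∈ unitaryGroup n 𝕜) (W : Matrix n m 𝕜) (f : n → 𝕜) :
    ∑ i, ∑ j, ‖∑ k, f k * star (gaborSystem W Φ i j k)‖ ^ 2 =
      ∑ k, ‖f k‖ ^ 2 * ∑ i, ‖W k i‖ ^ 2 := by
  have hΦ' : Φᴴ ∈ unitaryGroup n 𝕜 := by rw [← star_eq_conjTranspose]; exact Unitary.star_mem hΦ
  calc ∑ i, ∑ j, ‖∑ k, f k * star (gaborSystem W Φ i j k)‖ ^ 2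
      = ∑ i, ∑ j, ‖(Φᴴ *ᵥ fun k => f k * star (W k i)) j‖ ^ 2 := by
        simp only [gaborSystem, mulVec_diagonal]
        simp [mulVec, dotProduct, mul_comm, mul_left_comm]
    _ = ∑ i, ∑ k, ‖f k * star (W k i)‖ ^ 2 := by
        simp_rw [sum_norm_sq_mulVec_of_mem_unitaryGroup_s11 hΦ']
    _ = ∑ k, ‖f k‖ ^ 2 * ∑ i, ‖W k i‖ ^ 2 := by
        rw [Finset.sum_comm]
        simp [norm_mul, mul_pow, Finset.mul_sum]

end Matrix

namespace SimpleGraph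

variable {V : Type*} [Fintype V] [DecidableEq V] {G : SimpleGraph V} [DecidableRel G.Adj]

theorem Iso.lapMatrix_submatrix (R : Type*) [AddGroupWithOne R] (φ : G ≃g G) :
    (G.lapMatrix R).submatrix φ φ = G.lapMatrix R := by
  ext i j
  simp [lapMatrix, degMatrix, diagonal_apply, adjMatrix_apply, φ.injective.eq_iff, φ.map_adj_iff]

theorem Iso.exp_smul_lapMatrix_submatrix {𝕜 : Type*} [RCLike 𝕜] (φ : G ≃g G) (c : 𝕜) :
    (NormedSpace.exp (c • G.lapMatrix 𝕜)).submatrix φ φ =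
      NormedSpace.exp (c • G.lapMatrix 𝕜) :=
  exp_submatrix_eq_of_submatrix_eq (σ := φ.toEquiv)
    (by
      rw [submatrix_smul, Pi.smul_apply, Pi.smul_apply]
      exact congrArg (c • ·) (φ.lapMatrix_submatrix 𝕜))

theorem isSymm_exp_smul_lapMatrix {𝕜 : Type*} [RCLike 𝕜] (c : 𝕜) :
    (NormedSpace.exp (c • G.lapMatrix 𝕜)).IsSymm :=
  ((G.isSymm_lapMatrix (R := 𝕜)).smul c).exp

end SimpleGraph

theorem vertexTransitive_tight_frame_general {N : ℕ} (G : SimpleGraph (Fin N))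
    [DecidableRel G.Adj]
    (htrans : ∀ u v : Fin N, ∃ π : Equiv.Perm (Fin N),
      (∀ x y : Fin N, G.Adj x y ↔ G.Adj (π x) (π y)) ∧ π u = v)
    (Φ : Matrix (Fin N) (Fin N) ℂ) (hΦ : Φ ∈ Matrix.unitaryGroup (Fin N) ℂ)
    (t : ℝ)
    (H : Matrix (Fin N) (Fin N) ℂ)
    (hH : H = NormedSpace.exp ((-t : ℂ) • G.lapMatrix ℂ))
    (ψ : Fin N → Fin N → Fin N → ℂ)
    (hψ : ∀ i j, ψ i j = Matrix.diagonal (fun k => H k i) *ᵥ (fun k => Φ k j)) :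
    (∀ i j : Fin N, ∃ P : Matrix (Fin N) (Fin N) ℂ,
      (∃ π : Equiv.Perm (Fin N), ∀ r s, P r s = if r = π s then 1 else 0) ∧
      P * H = H * P ∧ (fun k => H k j) = P *ᵥ (fun k => H k i)) ∧
    (∀ i j : Fin N, ∑ k, ‖H k i‖ ^ 2 = ∑ k, ‖H k j‖ ^ 2) ∧
    (∃ A : ℝ, 0 < A ∧ ∀ f : Fin N → ℂ,
      ∑ i, ∑ j, ‖∑ k, f k * (starRingEnd ℂ) (ψ i j k)‖ ^ 2 = A * ∑ k, ‖f k‖ ^ 2) := by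
  have hauto (i j : Fin N) : ∃ φ : G ≃g G, φ i = j := by
    obtain ⟨π, hπ, hπij⟩ := htrans i j
    exact ⟨⟨π, (hπ _ _).symm⟩, hπij⟩
  have hinv (φ : G ≃g G) : H.submatrix φ φ = H := hH ▸ φ.exp_smul_lapMatrix_submatrix _
  have hcol (i j : Fin N) : ∑ k, ‖H k i‖ ^ 2 = ∑ k, ‖H k j‖ ^ 2 := by
    obtain ⟨φ, rfl⟩ := hauto i j
    exact (sum_norm_sq_col_eq_of_submatrix_eq (σ := φ.toEquiv) (hinv φ) i).symm
  refine ⟨fun i j => ?_, hcol, ?_⟩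
  · obtain ⟨φ, rfl⟩ := hauto i j
    let σ : Equiv.Perm (Fin N) := φ.toEquiv
    refine ⟨σ⁻¹.permMatrix ℂ, ⟨σ, fun r s => ?_⟩, commute_permMatrix_iff.mpr (hinv φ.symm),
      col_eq_permMatrix_mulVec_of_submatrix_eq (hinv φ) i⟩
    simp only [PEquiv.toMatrix_apply, Equiv.toPEquiv_apply, Option.mem_def, Option.some_inj,
      Equiv.Perm.inv_def, Equiv.symm_apply_eq]
  · obtain ⟨A, hA, hAcol⟩ :=
      exists_pos_forall_sum_norm_sq_col_eq (hH ▸ isUnit_exp _) hcol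
    have hrow (k : Fin N) : ∑ i, ‖H k i‖ ^ 2 = A := by
      simpa only [(hH ▸ G.isSymm_exp_smul_lapMatrix _ : H.IsSymm).apply] using hAcol k
    obtain rfl : ψ = gaborSystem H Φ := funext₂ hψ
    refine ⟨A, hA, fun f => ?_⟩
    simp only [starRingEnd_apply, sum_sum_norm_sq_gaborSystem hΦ, hrow, Finset.mul_sum, mul_comm]

/-- for a finite connected vertex-transitive graph, for every
`t ≥ 0`: any two heat-kernel columns are related by a permutation matrix
commuting with `H_t`, all columns have equal norm, and the graph Gabor system
`{D_i(t) φ_j}` is a tight frame for `ℂ^N`. -/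
theorem vertexTransitive_tight_frame {N : ℕ} (G : SimpleGraph (Fin N))
    [DecidableRel G.Adj] (hconn : G.Connected)
    (htrans : ∀ u v : Fin N, ∃ π : Equiv.Perm (Fin N),
      (∀ x y : Fin N, G.Adj x y ↔ G.Adj (π x) (π y)) ∧ π u = v)
    (Φ : Matrix (Fin N) (Fin N) ℂ) (hΦ : Φ ∈ Matrix.unitaryGroup (Fin N) ℂ)
    (lam : Fin N → ℝ)
    (heig : ∀ l, G.lapMatrix ℂ *ᵥ (fun i => Φ i l) = (lam l : ℂ) • (fun i => Φ i l))
    (t : ℝ) (ht : 0 ≤ t)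
    (H : Matrix (Fin N) (Fin N) ℂ)
    (hH : H = NormedSpace.exp ((-t : ℂ) • G.lapMatrix ℂ))
    (ψ : Fin N → Fin N → Fin N → ℂ)
    (hψ : ∀ i j, ψ i j = Matrix.diagonal (fun k => H k i) *ᵥ (fun k => Φ k j)) :
    (∀ i j : Fin N, ∃ P : Matrix (Fin N) (Fin N) ℂ,
      (∃ π : Equiv.Perm (Fin N), ∀ r s, P r s = if r = π s then 1 else 0) ∧
      P * H = H * P ∧ (fun k => H k j) = P *ᵥ (fun k => H k i)) ∧
    (∀ i j : Fin N, ∑ k, ‖H k i‖ ^ 2 = ∑ k, ‖H k j‖ ^ 2) ∧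
    (∃ A : ℝ, 0 < A ∧ ∀ f : Fin N → ℂ,
      ∑ i, ∑ j, ‖∑ k, f k * (starRingEnd ℂ) (ψ i j k)‖ ^ 2 = A * ∑ k, ‖f k‖ ^ 2) :=
  vertexTransitive_tight_frame_general G htrans Φ hΦ t H hH ψ hψ
end
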